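/- arXiv:1507.04812 — 2 statements merged into one kernel-verified Lean document; each statement's English description precedes it below -/
import Mathlib

section
/- Let w be an A* weight on [-1,1] with A* constant L*, let ξ ∈ [-1,1], and let w₁(x) := f(|x-ξ|), where f : [0,2] → [0,∞) is nondecreasing and satisfies f(2x) ≤ K f(x) for some K > 0 and all 0 ≤ x ≤ 1. Then the product w̃ := w·w₁ is an A* weight on [-1,1] with an A* constant L depending only on K and L*. -/
open MeasureTheory Set
open scoped BigOperators

noncomputable section

/-- `φ(x) = √(1 - x²)`. -/
def phi (x : ℝ) : ℝ := Real.sqrt (1 - x ^ 2)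

/-- `ρ(h, x) = hφ(x) + h²`. -/
def rho (h x : ℝ) : ℝ := h * phi x + h ^ 2

/-- `ρ_n(x) = φ(x)/n + 1/n²`. -/
def rhoN (n : ℕ) (x : ℝ) : ℝ := phi x / n + 1 / (n : ℝ) ^ 2

/-- The averaged weight `w_n(x) = ρ_n(x)⁻¹ ∫_{x-ρ_n(x)}^{x+ρ_n(x)} w(u) du`. -/
def wAvg (w : ℝ → ℝ) (n : ℕ) (x : ℝ) : ℝ :=
  (rhoN n x)⁻¹ * ∫ u in (x - rhoN n x)..(x + rhoN n x), w u

/-- Essential sup norm of `g` on `S ⊆ ℝ`. -/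
def supNorm (g : ℝ → ℝ) (S : Set ℝ) : ℝ :=
  essSup (fun x => |g x|) (volume.restrict S)

/-- `w` is an A* weight on `[-1,1]` with A* constant `L`: nonnegative, integrable, and
`w(x) ≤ (L/|I|) ∫_I w` for every interval `I ⊆ [-1,1]` and every `x ∈ I`. -/
def AStarWith (w : ℝ → ℝ) (L : ℝ) : Prop :=
  0 < L ∧ (∀ x, 0 ≤ w x) ∧ IntegrableOn w (Icc (-1 : ℝ) 1) ∧
    ∀ a b : ℝ, -1 ≤ a → a < b → b ≤ 1 → ∀ x ∈ Icc a b,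
      w x ≤ L / (b - a) * ∫ u in a..b, w u

/-- `w` is an A* weight. -/
def AStar (w : ℝ → ℝ) : Prop := ∃ L : ℝ, AStarWith w L

/-- `w` vanishes outside `[-1,1]` (weights are extended by zero outside `[-1,1]`). -/
def ZeroOutside (w : ℝ → ℝ) : Prop := ∀ x, x ∉ Icc (-1 : ℝ) 1 → w x = 0

/-- `g` is (the function given by) an algebraic polynomial of degree `≤ n - 1`,
i.e. `g ∈ 𝒫_n`. -/
def IsPolyDeg (n : ℕ) (g : ℝ → ℝ) : Prop :=
  ∃ p : Polynomial ℝ, p.degree < (n : WithBot ℕ) ∧ ∀ x, g x = p.eval x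

/-- Weighted best approximation `E_n(f, S)_w := inf_{q ∈ 𝒫_n} ‖w (f - q)‖_S`. -/
def Edeg (n : ℕ) (f : ℝ → ℝ) (S : Set ℝ) (w : ℝ → ℝ) : ℝ :=
  sInf {v : ℝ | ∃ q : ℝ → ℝ, IsPolyDeg n q ∧ v = supNorm (fun x => w x * (f x - q x)) S}

/-- `f ∈ L∞^w`, i.e. `‖w f‖_{[-1,1]} < ∞`. -/
def MemLinftyW (w f : ℝ → ℝ) : Prop :=
  ∃ C : ℝ, ∀ᵐ x ∂(volume.restrict (Icc (-1 : ℝ) 1)), |w x * f x| ≤ C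

/-- `Z_{A,h}^j := {x ∈ [-1,1] : |x - z_j| ≤ A ρ(h, z_j)}`. -/
def Zj (M : ℕ) (z : Fin M → ℝ) (A h : ℝ) (j : Fin M) : Set ℝ :=
  {x ∈ Icc (-1 : ℝ) 1 | |x - z j| ≤ A * rho h (z j)}

/-- `I_{A,h} := {x ∈ [-1,1] : |x - z_j| ≥ A ρ(h, z_j) for all j}`. -/
def Iah (M : ℕ) (z : Fin M → ℝ) (A h : ℝ) : Set ℝ :=
  {x ∈ Icc (-1 : ℝ) 1 | ∀ j : Fin M, A * rho h (z j) ≤ |x - z j|}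

/-- The class `W*(Z)`: `w` is an A* weight and there is `c* > 0` such that
`c* w(y) ≤ w(x) ≤ c*⁻¹ w(y)` whenever `x, y ∈ [-1,1]`, `|x - y| ≤ ρ(ε, x)` and
`dist([x,y], z_j) ≥ ρ(ε, z_j)` for all `j`. -/
def WStar (M : ℕ) (z : Fin M → ℝ) (w : ℝ → ℝ) : Prop :=
  AStar w ∧ ∃ c : ℝ, 0 < c ∧ ∀ ε : ℝ, 0 < ε → ∀ x y : ℝ,
    x ∈ Icc (-1 : ℝ) 1 → y ∈ Icc (-1 : ℝ) 1 → |x - y| ≤ rho ε x →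
    (∀ j : Fin M, ∀ u ∈ uIcc x y, rho ε (z j) ≤ |u - z j|) →
    c * w y ≤ w x ∧ w x ≤ c⁻¹ * w y

open Classical in
/-- The `r`-th symmetric difference `Δ_h^r(f, x, J)`. -/
def symmDiffR (r : ℕ) (h : ℝ) (f : ℝ → ℝ) (x : ℝ) (J : Set ℝ) : ℝ :=
  if Icc (x - r * h / 2) (x + r * h / 2) ⊆ J then
    ∑ i ∈ Finset.range (r + 1),
      (-1 : ℝ) ^ (r - i) * (r.choose i : ℝ) * f (x - r * h / 2 + i * h)
  else 0

/-- Main part weighted modulus of smoothness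
`Ω_φ^r(f, A, t)_w := sup_{0 < h ≤ t} ‖w(·) Δ_{hφ(·)}^r(f, ·, I_{A,h})‖`. -/
def OmegaMod (M : ℕ) (z : Fin M → ℝ) (w f : ℝ → ℝ) (r : ℕ) (A t : ℝ) : ℝ :=
  sSup {v : ℝ | ∃ h : ℝ, 0 < h ∧ h ≤ t ∧
    v = supNorm (fun x => w x * symmDiffR r (h * phi x) f x (Iah M z A h)) (Icc (-1 : ℝ) 1)}

/-- Restricted main part modulus `Ω_φ^r(f, t)_{S, w}`. -/
def OmegaRest (w f : ℝ → ℝ) (S : Set ℝ) (r : ℕ) (t : ℝ) : ℝ :=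
  sSup {v : ℝ | ∃ h : ℝ, 0 < h ∧ h ≤ t ∧
    v = supNorm (fun x => w x * symmDiffR r (h * phi x) f x S) (Icc (-1 : ℝ) 1)}

/-- Complete weighted modulus of smoothness
`ω_φ^r(f, A, B, t)_w := Ω_φ^r(f, A, t)_w + Σ_j E_r(f, Z_{B,t}^j)_w`. -/
def omegaMod (M : ℕ) (z : Fin M → ℝ) (w f : ℝ → ℝ) (r : ℕ) (A B t : ℝ) : ℝ :=
  OmegaMod M z w f r A t + ∑ j : Fin M, Edeg r f (Zj M z B t j) w

/-- The extended sequence `z_0 = -1, z_1, ..., z_M, z_{M+1} = 1`. -/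
def zext (M : ℕ) (z : Fin M → ℝ) (i : Fin (M + 2)) : ℝ :=
  if h : (i : ℕ) = 0 then -1
  else if h2 : (i : ℕ) ≤ M then z ⟨(i : ℕ) - 1, by omega⟩
  else 1

/-- `𝔇`: the smallest positive gap between consecutive points of `-1, z_1, ..., z_M, 1`. -/
def Dgap (M : ℕ) (z : Fin M → ℝ) : ℝ :=
  sInf {d : ℝ | 0 < d ∧ ∃ i : Fin (M + 1), d = zext M z i.succ - zext M z i.castSucc}

/-- Two-sided equivalence with constants: `c a ≤ b ≤ c' a`. -/
def EquivBy (c c' a b : ℝ) : Prop := c * a ≤ b ∧ b ≤ c' * a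

/-- The `r`-th derivative of a polynomial, as a function on `ℝ`. -/
def polyDeriv (r : ℕ) (p : Polynomial ℝ) : ℝ → ℝ :=
  fun x => ((fun q : Polynomial ℝ => Polynomial.derivative q)^[r] p).eval x

/-- The realization functional
`R_{r,φ}(f, t, 𝒫_n)_w := inf_{P ∈ 𝒫_n} (‖w(f - P)‖ + t^r ‖w φ^r P^{(r)}‖)`. -/
def Rfunc (r : ℕ) (f : ℝ → ℝ) (t : ℝ) (n : ℕ) (w : ℝ → ℝ) : ℝ :=
  sInf {v : ℝ | ∃ p : Polynomial ℝ, p.degree < (n : WithBot ℕ) ∧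
    v = supNorm (fun x => w x * (f x - p.eval x)) (Icc (-1 : ℝ) 1) +
      t ^ r * supNorm (fun x => w x * phi x ^ r * polyDeriv r p x) (Icc (-1 : ℝ) 1)}

/-!
Near `ξ` the factor `f(|x - ξ|)` may be small, but the A* inequality caps `w` on an interval `I`
by `L*/|I| ∫_I w`, so the part of `I` within distance `|I|/(4L*)` of `ξ` carries at most half of
`∫_I w`. On the remaining half every `u` satisfies `|x - ξ| ≤ (1 + 4L*)|u - ξ|` for all `x ∈ I`,
and iterating the doubling condition `m` times with `2^m ≥ 1 + 4L*` gives
`f(|x - ξ|) ≤ K^m f(|u - ξ|)`. Hence `L = 2 L* K^m` works.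
-/

open Metric

lemma MonotoneOn.le_pow_mul_of_le_two_pow_mul {f : ℝ → ℝ} {K : ℝ} (hK : 0 ≤ K)
    (hf : MonotoneOn f (Icc 0 2)) (hdoub : ∀ x ∈ Icc (0 : ℝ) 1, f (2 * x) ≤ K * f x) (m : ℕ)
    {s t : ℝ} (hs : s ∈ Icc (0 : ℝ) 2) (ht : t ∈ Icc (0 : ℝ) 2) (hst : s ≤ 2 ^ m * t) :
    f s ≤ K ^ m * f t := by
  induction m generalizing s with
  | zero => simpa using hf hs ht (by simpa using hst)
  | succ m ih =>
    have hhalf : s / 2 ∈ Icc (0 : ℝ) 1 := ⟨by linarith [hs.1], by linarith [hs.2]⟩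
    calc f s = f (2 * (s / 2)) := by ring_nf
      _ ≤ K * f (s / 2) := hdoub _ hhalf
      _ ≤ K * (K ^ m * f t) := by
        gcongr
        exact ih ⟨hhalf.1, by linarith [hhalf.2]⟩ (by rw [pow_succ] at hst; linarith)
      _ = K ^ (m + 1) * f t := by ring

lemma abs_sub_mem_Icc_zero_two {x ξ : ℝ} (hx : x ∈ Icc (-1 : ℝ) 1) (hξ : ξ ∈ Icc (-1 : ℝ) 1) :
    |x - ξ| ∈ Icc (0 : ℝ) 2 :=
  ⟨abs_nonneg _, abs_le.mpr ⟨by linarith [hx.1, hξ.2], by linarith [hx.2, hξ.1]⟩⟩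

lemma integrableOn_mul_comp_abs_sub {w f : ℝ → ℝ} {ξ : ℝ} (hw : IntegrableOn w (Icc (-1) 1))
    (hξ : ξ ∈ Icc (-1 : ℝ) 1) (hf0 : ∀ x ∈ Icc (0 : ℝ) 2, 0 ≤ f x)
    (hf : MonotoneOn f (Icc 0 2)) :
    IntegrableOn (fun x => w x * f |x - ξ|) (Icc (-1) 1) := by
  set g : ℝ → ℝ := fun t => f (projIcc 0 2 zero_le_two t)
  have hg : Monotone g := fun s t hst =>
    hf (projIcc 0 2 _ s).2 (projIcc 0 2 _ t).2 (monotone_projIcc _ hst)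
  have hg_bound : ∀ t, ‖g t‖ ≤ f 2 := fun t => by
    have ht := (projIcc 0 2 zero_le_two t).2
    rw [Real.norm_eq_abs, abs_of_nonneg (hf0 _ ht)]
    exact hf ht (right_mem_Icc.mpr zero_le_two) ht.2
  have hwg : IntegrableOn (fun x => w x * g |x - ξ|) (Icc (-1) 1) :=
    hw.mul_bdd (hg.measurable.comp (measurable_id.sub_const ξ).abs).aestronglyMeasurable
      (Filter.Eventually.of_forall fun x => hg_bound _)
  refine hwg.congr_fun (fun x hx => ?_) measurableSet_Icc
  simp only [g, projIcc_of_mem _ (abs_sub_mem_Icc_zero_two hx hξ)]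

namespace AStarWith

variable {w : ℝ → ℝ} {L a b : ℝ}

lemma pos (hw : AStarWith w L) : 0 < L := hw.1

lemma nonneg (hw : AStarWith w L) (x : ℝ) : 0 ≤ w x := hw.2.1 x

lemma integrableOn (hw : AStarWith w L) : IntegrableOn w (Icc (-1) 1) := hw.2.2.1

lemma le_setIntegral (hw : AStarWith w L) (ha : -1 ≤ a) (hab : a < b) (hb : b ≤ 1) {x : ℝ}
    (hx : x ∈ Icc a b) : w x ≤ L / (b - a) * ∫ u in Icc a b, w u := by
  rw [integral_Icc_eq_integral_Ioc, ← intervalIntegral.integral_of_le hab.le]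
  exact hw.2.2.2 a b ha hab hb x hx

lemma setIntegral_inter_ball_le (hw : AStarWith w L) (ha : -1 ≤ a) (hab : a < b) (hb : b ≤ 1)
    (ξ : ℝ) {r : ℝ} (hr : 0 ≤ r) :
    ∫ u in Icc a b ∩ ball ξ r, w u ≤ 2 * r * (L / (b - a) * ∫ u in Icc a b, w u) := by
  have hbound : ∀ u ∈ Icc a b ∩ ball ξ r, ‖w u‖ ≤ L / (b - a) * ∫ u in Icc a b, w u :=
    fun u hu => by
      rw [Real.norm_eq_abs, abs_of_nonneg (hw.nonneg u)]
      exact hw.le_setIntegral ha hab hb hu.1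
  have hbound_nonneg : 0 ≤ L / (b - a) * ∫ u in Icc a b, w u :=
    (hw.nonneg a).trans (hw.le_setIntegral ha hab hb (left_mem_Icc.mpr hab.le))
  calc ∫ u in Icc a b ∩ ball ξ r, w u
      ≤ (L / (b - a) * ∫ u in Icc a b, w u) * volume.real (Icc a b ∩ ball ξ r) :=
        (le_abs_self _).trans (norm_setIntegral_le_of_norm_le_const
          (measure_inter_lt_top_of_right_ne_top measure_ball_lt_top.ne) hbound)
    _ ≤ (L / (b - a) * ∫ u in Icc a b, w u) * volume.real (ball ξ r) := by
        gcongr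
        exacts [measure_ball_lt_top.ne, inter_subset_right]
    _ = 2 * r * (L / (b - a) * ∫ u in Icc a b, w u) := by
        rw [Real.volume_real_ball hr]; ring

lemma setIntegral_le_two_mul_setIntegral_sdiff_ball (hw : AStarWith w L) (ha : -1 ≤ a)
    (hab : a < b) (hb : b ≤ 1) (ξ : ℝ) :
    ∫ u in Icc a b, w u ≤ 2 * ∫ u in Icc a b \ ball ξ ((b - a) / (4 * L)), w u := by
  have hL := hw.pos
  have hba : 0 < b - a := sub_pos.mpr hab
  have hnear := hw.setIntegral_inter_ball_le ha hab hb ξ (r := (b - a) / (4 * L)) (by positivity)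
  have hsplit := integral_inter_add_sdiff (μ := volume) (measurableSet_ball (x := ξ)
    (ε := (b - a) / (4 * L))) (hw.integrableOn.mono_set (Icc_subset_Icc ha hb))
  have hhalf : 2 * ((b - a) / (4 * L)) * (L / (b - a) * ∫ u in Icc a b, w u)
      = (∫ u in Icc a b, w u) / 2 := by
    field_simp; ring
  linarith

lemma mul_of_le_const_mul (hw : AStarWith w L) (hw0 : ZeroOutside w) {g : ℝ → ℝ} {ξ C : ℝ}
    (hC : 0 < C) (hwg : IntegrableOn (fun x => w x * g x) (Icc (-1) 1))
    (hg0 : ∀ x ∈ Icc (-1 : ℝ) 1, 0 ≤ g x)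
    (hg : ∀ x ∈ Icc (-1 : ℝ) 1, ∀ u ∈ Icc (-1 : ℝ) 1,
      |x - ξ| ≤ (1 + 4 * L) * |u - ξ| → g x ≤ C * g u) :
    AStarWith (fun x => w x * g x) (2 * L * C) := by
  have hL := hw.pos
  have hwg0 : ∀ x, 0 ≤ w x * g x := fun x => by
    by_cases hx : x ∈ Icc (-1 : ℝ) 1
    · exact mul_nonneg (hw.nonneg x) (hg0 x hx)
    · rw [hw0 x hx, zero_mul]
  refine ⟨by positivity, hwg0, hwg, fun a b ha hab hb x hx => ?_⟩
  have hsub : Icc a b ⊆ Icc (-1) 1 := Icc_subset_Icc ha hb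
  have hba : 0 < b - a := sub_pos.mpr hab
  set far := Icc a b \ ball ξ ((b - a) / (4 * L))
  have hfar : far ⊆ Icc a b := sdiff_subset
  have hcompare : ∀ u ∈ far, g x * w u ≤ C * (w u * g u) := by
    rintro u ⟨hu, hu_far⟩
    have hr : b - a ≤ 4 * L * |u - ξ| := by
      rw [mem_ball, Real.dist_eq, not_lt, div_le_iff₀ (by positivity)] at hu_far
      linarith
    have hxu : |x - ξ| ≤ (1 + 4 * L) * |u - ξ| :=
      calc |x - ξ| ≤ |x - u| + |u - ξ| := abs_sub_le _ _ _
        _ ≤ (b - a) + |u - ξ| := by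
          gcongr; exact abs_le.mpr ⟨by linarith [hx.1, hu.2], by linarith [hx.2, hu.1]⟩
        _ ≤ (1 + 4 * L) * |u - ξ| := by linarith
    calc g x * w u ≤ C * g u * w u :=
          mul_le_mul_of_nonneg_right (hg x (hsub hx) u (hsub hu) hxu) (hw.nonneg u)
      _ = C * (w u * g u) := by ring
  have hwg_ab : IntegrableOn (fun u => w u * g u) (Icc a b) := hwg.mono_set hsub
  have hgx : 0 ≤ g x := hg0 x (hsub hx)
  rw [intervalIntegral.integral_of_le hab.le, ← integral_Icc_eq_integral_Ioc]
  calc w x * g x ≤ L / (b - a) * (∫ u in Icc a b, w u) * g x := by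
        gcongr; exact hw.le_setIntegral ha hab hb hx
    _ ≤ L / (b - a) * (2 * ∫ u in far, w u) * g x := by
        gcongr; exact hw.setIntegral_le_two_mul_setIntegral_sdiff_ball ha hab hb ξ
    _ = 2 * L / (b - a) * ∫ u in far, g x * w u := by rw [integral_const_mul]; ring
    _ ≤ 2 * L / (b - a) * ∫ u in far, C * (w u * g u) := by
        refine mul_le_mul_of_nonneg_left ?_ (by positivity)
        exact setIntegral_mono_on ((hw.integrableOn.mono_set (hfar.trans hsub)).const_mul _)
          ((hwg_ab.mono_set hfar).const_mul _)
          (measurableSet_Icc.diff measurableSet_ball) hcompare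
    _ ≤ 2 * L / (b - a) * (C * ∫ u in Icc a b, w u * g u) := by
        rw [integral_const_mul]
        refine mul_le_mul_of_nonneg_left (mul_le_mul_of_nonneg_left ?_ hC.le) (by positivity)
        exact setIntegral_mono_set hwg_ab (Filter.Eventually.of_forall hwg0) hfar.eventuallyLE
    _ = 2 * L * C / (b - a) * ∫ u in Icc a b, w u * g u := by ring

end AStarWith

/-- products of A* weights with monotone doubling-type factors are A* weights. -/
theorem stmt_0 (K Lstar : ℝ) (hK : 0 < K) (hLstar : 0 < Lstar) :
    ∃ L : ℝ, 0 < L ∧ ∀ (w : ℝ → ℝ) (ξ : ℝ) (f : ℝ → ℝ),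
      AStarWith w Lstar → ZeroOutside w → ξ ∈ Icc (-1 : ℝ) 1 →
      (∀ x ∈ Icc (0 : ℝ) 2, 0 ≤ f x) →
      MonotoneOn f (Icc (0 : ℝ) 2) →
      (∀ x ∈ Icc (0 : ℝ) 1, f (2 * x) ≤ K * f x) →
      AStarWith (fun x => w x * f |x - ξ|) L := by
  obtain ⟨m, hm⟩ : ∃ m : ℕ, 1 + 4 * Lstar < 2 ^ m := pow_unbounded_of_one_lt _ one_lt_two
  refine ⟨2 * Lstar * K ^ m, by positivity, fun w ξ f hw hw0 hξ hf0 hf hdoub => ?_⟩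
  refine hw.mul_of_le_const_mul hw0 (ξ := ξ) (by positivity)
    (integrableOn_mul_comp_abs_sub hw.integrableOn hξ hf0 hf)
    (fun x hx => hf0 _ (abs_sub_mem_Icc_zero_two hx hξ)) fun x hx u hu hxu => ?_
  refine hf.le_pow_mul_of_le_two_pow_mul hK.le hdoub m (abs_sub_mem_Icc_zero_two hx hξ)
    (abs_sub_mem_Icc_zero_two hu hξ) (hxu.trans (mul_le_mul_of_nonneg_right hm.le (abs_nonneg _)))
end
end

section
/- Let w be an A* weight on [-1,1] with A* constant L* and let n ∈ ℕ. Then the averaged weight w_n is an A* weight on [-1,1] with an A* constant L depending only on L*. -/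
/-!
A* weights are quantitatively doubling: if `[a, b] ⊆ [c, d] ⊆ [-1, 1]` and
`d - c ≤ (1 + 1/(2L))^k (b - a)`, then `∫_c^d w ≤ 2^k ∫_a^b w`. For `k = 1` this holds because
`w ≤ L/(d - c) ∫_c^d w` on `[c, d]`, so the part of `[c, d]` outside `[a, b]`, of length at most
`(d - c)/(2L)`, carries at most half the mass of `[c, d]`; the general case follows by
enlarging `[a, b]` step by step.

Since `w` vanishes outside `[-1, 1]`, `w_n(x)` is `ρ_n(x)⁻¹` times the mass of the window
`[x - ρ_n(x), x + ρ_n(x)] ∩ [-1, 1]`, whose length lies between `ρ_n(x)` and `2ρ_n(x)`. Take an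
interval `I ∋ x`. If `|I| ≤ ρ_n(x)`, then `ρ_n` is comparable on `I` and doubling gives
`w_n(x) ≲ w_n(y)` for every `y ∈ I`. If `|I| ≥ ρ_n(x)`, the A* bound on the hull of the window and
`I`, doubling, and `w ≤ L w_n` give `w_n(x) ≲ |I|⁻¹ ∫_I w ≲ |I|⁻¹ ∫_I w_n`.
-/

open MeasureTheory Set
open scoped BigOperators

noncomputable section

lemma exists_Icc_between {a b c d ℓ : ℝ} (hca : c ≤ a) (hbd : b ≤ d) (hℓ : b - a ≤ ℓ)
    (hℓd : ℓ ≤ d - c) : ∃ a' b', c ≤ a' ∧ a' ≤ a ∧ b ≤ b' ∧ b' ≤ d ∧ b' - a' = ℓ := by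
  rcases le_total c (b - ℓ) with h | h
  · exact ⟨b - ℓ, b, h, by linarith, le_rfl, hbd, by ring⟩
  · exact ⟨c, c + ℓ, le_rfl, hca, by linarith, by linarith, by ring⟩

namespace AStarWith

variable {w : ℝ → ℝ} {L : ℝ}

lemma intervalIntegrable (hw : AStarWith w L) {a b : ℝ} (ha : a ∈ Icc (-1 : ℝ) 1)
    (hb : b ∈ Icc (-1 : ℝ) 1) : IntervalIntegrable w volume a b :=
  (hw.2.2.1.mono_set (uIcc_subset_Icc ha hb)).intervalIntegrable

lemma integral_nonneg (hw : AStarWith w L) {a b : ℝ} (hab : a ≤ b) : 0 ≤ ∫ u in a..b, w u :=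
  intervalIntegral.integral_nonneg hab fun u _ => hw.2.1 u

lemma integral_le_mul_integral (hw : AStarWith w L) {a b c d : ℝ} (hc : -1 ≤ c) (hca : c ≤ a)
    (hab : a ≤ b) (hbd : b ≤ d) (hd : d ≤ 1) (hcd : c < d) :
    ∫ u in a..b, w u ≤ (b - a) * (L / (d - c) * ∫ u in c..d, w u) := by
  have h := intervalIntegral.integral_mono_on hab
    (hw.intervalIntegrable ⟨by linarith, by linarith⟩ ⟨by linarith, by linarith⟩)
    intervalIntegrable_const
    fun x hx => hw.2.2.2 c d hc hcd hd x ⟨hca.trans hx.1, hx.2.trans hbd⟩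
  rwa [intervalIntegral.integral_const, smul_eq_mul] at h

lemma integral_le_two_mul_integral (hw : AStarWith w L) {a b c d : ℝ} (hc : -1 ≤ c)
    (hca : c ≤ a) (hab : a < b) (hbd : b ≤ d) (hd : d ≤ 1)
    (hlen : d - c ≤ (1 + (2 * L)⁻¹) * (b - a)) :
    ∫ u in c..d, w u ≤ 2 * ∫ u in a..b, w u := by
  have hL := hw.1
  have hcd : c < d := by linarith
  have hint : ∀ {s t : ℝ}, c ≤ s → s ≤ d → c ≤ t → t ≤ d → IntervalIntegrable w volume s t :=
    fun _ _ _ _ => hw.intervalIntegrable ⟨by linarith, by linarith⟩ ⟨by linarith, by linarith⟩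
  have hleft := hw.integral_le_mul_integral hc le_rfl hca (hab.le.trans hbd) hd hcd
  have hright := hw.integral_le_mul_integral hc (hca.trans hab.le) hbd le_rfl hd hcd
  have hsplit : (∫ u in c..a, w u) + (∫ u in a..b, w u) + ∫ u in b..d, w u =
      ∫ u in c..d, w u := by
    rw [intervalIntegral.integral_add_adjacent_intervals (hint ?_ ?_ ?_ ?_) (hint ?_ ?_ ?_ ?_),
      intervalIntegral.integral_add_adjacent_intervals (hint ?_ ?_ ?_ ?_) (hint ?_ ?_ ?_ ?_)]
    all_goals linarith
  have hsmall : ((a - c) + (d - b)) * (L / (d - c)) ≤ 1 / 2 := by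
    rw [← mul_div_assoc, div_le_iff₀ (by linarith)]
    have : (d - c) - (b - a) ≤ (b - a) / (2 * L) := by rw [div_eq_inv_mul]; linarith
    rw [le_div_iff₀ (by positivity)] at this
    nlinarith
  nlinarith [hw.integral_nonneg hcd.le]

lemma integral_le_two_pow_mul_integral (hw : AStarWith w L) (k : ℕ) {a b c d : ℝ} (hc : -1 ≤ c)
    (hca : c ≤ a) (hab : a < b) (hbd : b ≤ d) (hd : d ≤ 1)
    (hlen : d - c ≤ (1 + (2 * L)⁻¹) ^ k * (b - a)) :
    ∫ u in c..d, w u ≤ 2 ^ k * ∫ u in a..b, w u := by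
  have hq : 1 ≤ 1 + (2 * L)⁻¹ := by have := hw.1; simp only [le_add_iff_nonneg_right]; positivity
  induction k generalizing a b with
  | zero =>
    rw [pow_zero, one_mul] at hlen
    obtain rfl : c = a := by linarith
    obtain rfl : d = b := by linarith
    simp
  | succ k ih =>
    obtain ⟨a', b', hca', ha'a, hbb', hb'd, hlen'⟩ := exists_Icc_between hca hbd
      (ℓ := min (d - c) ((1 + (2 * L)⁻¹) * (b - a))) (le_min (by linarith) (by nlinarith))
      (min_le_left _ _)
    have hstep : ∫ u in a'..b', w u ≤ 2 * ∫ u in a..b, w u :=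
      hw.integral_le_two_mul_integral (hc.trans hca') ha'a hab hbb' (hb'd.trans hd)
        (hlen' ▸ min_le_right _ _)
    have hrest : ∫ u in c..d, w u ≤ 2 ^ k * ∫ u in a'..b', w u := by
      refine ih hca' (by linarith) hb'd ?_
      rw [hlen', mul_min_of_nonneg _ _ (by positivity)]
      refine le_min (le_mul_of_one_le_left (by linarith) (one_le_pow₀ hq)) ?_
      rwa [← mul_assoc, ← pow_succ]
    calc ∫ u in c..d, w u ≤ 2 ^ k * ∫ u in a'..b', w u := hrest
      _ ≤ 2 ^ k * (2 * ∫ u in a..b, w u) := by gcongr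
      _ = 2 ^ (k + 1) * ∫ u in a..b, w u := by ring

end AStarWith

namespace ZeroOutside

variable {w : ℝ → ℝ}

lemma support_subset (h0 : ZeroOutside w) : Function.support w ⊆ Icc (-1) 1 :=
  fun x hx => by_contra fun h => hx (h0 x h)

lemma integrable (h0 : ZeroOutside w) (hw : IntegrableOn w (Icc (-1 : ℝ) 1)) : Integrable w :=
  (integrableOn_iff_integrable_of_support_subset h0.support_subset).mp hw

lemma intervalIntegral_eq (h0 : ZeroOutside w) {a b : ℝ} (hab : a ≤ b)
    (h : max (-1) a ≤ min 1 b) :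
    ∫ u in a..b, w u = ∫ u in (max (-1) a)..(min 1 b), w u := by
  rw [intervalIntegral.integral_of_le hab, intervalIntegral.integral_of_le h,
    ← integral_Icc_eq_integral_Ioc, ← integral_Icc_eq_integral_Ioc,
    ← indicator_eq_self.mpr h0.support_subset, setIntegral_indicator measurableSet_Icc,
    Icc_inter_Icc, indicator_eq_self.mpr h0.support_subset]
  simp only [max_comm, min_comm]

end ZeroOutside

lemma phi_nonneg (x : ℝ) : 0 ≤ phi x := Real.sqrt_nonneg _

lemma sq_phi {x : ℝ} (hx : x ∈ Icc (-1 : ℝ) 1) : phi x ^ 2 = 1 - x ^ 2 :=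
  Real.sq_sqrt (by nlinarith [hx.1, hx.2])

lemma abs_sq_phi_sub_sq_phi_le {x y : ℝ} (hx : x ∈ Icc (-1 : ℝ) 1)
    (hy : y ∈ Icc (-1 : ℝ) 1) : |phi x ^ 2 - phi y ^ 2| ≤ 2 * |x - y| := by
  rw [sq_phi hx, sq_phi hy, show 1 - x ^ 2 - (1 - y ^ 2) = (x + y) * (y - x) by ring, abs_mul,
    abs_sub_comm]
  gcongr
  exact abs_le.mpr ⟨by linarith [hx.1, hy.1], by linarith [hx.2, hy.2]⟩

lemma rhoN_eq (n : ℕ) (x : ℝ) : rhoN n x = phi x * (n : ℝ)⁻¹ + ((n : ℝ)⁻¹) ^ 2 := by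
  simp only [rhoN, div_eq_mul_inv, one_mul, inv_pow]

lemma rhoN_pos {n : ℕ} (hn : 0 < n) (x : ℝ) : 0 < rhoN n x := by
  rw [rhoN_eq]
  have := phi_nonneg x
  positivity

lemma rhoN_le_two {n : ℕ} (hn : 0 < n) (x : ℝ) : rhoN n x ≤ 2 := by
  have hs : (n : ℝ)⁻¹ ≤ 1 := inv_le_one_of_one_le₀ (by exact_mod_cast hn)
  have hφ : phi x ≤ 1 := Real.sqrt_le_one.mpr (by nlinarith)
  rw [rhoN_eq]
  nlinarith [phi_nonneg x, inv_nonneg.mpr (Nat.cast_nonneg n : (0 : ℝ) ≤ n)]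

-- Both follow from `|φ(x)² - φ(y)²| ≤ 2|x - y| ≤ 2φ(x)/n + 2/n²`, which gives
-- `φ(y) ≤ φ(x) + 2/n` and `φ(x) ≤ φ(y) + 3/n`.
lemma rhoN_le_three_mul {n : ℕ} {x y : ℝ} (hn : 0 < n) (hx : x ∈ Icc (-1 : ℝ) 1)
    (hy : y ∈ Icc (-1 : ℝ) 1) (hxy : |x - y| ≤ rhoN n x) : rhoN n y ≤ 3 * rhoN n x := by
  have hd := abs_le.mp (abs_sq_phi_sub_sq_phi_le hx hy)
  simp only [rhoN_eq] at hxy ⊢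
  have hs : 0 < (n : ℝ)⁻¹ := by positivity
  have hφ : phi y ≤ phi x + 2 * (n : ℝ)⁻¹ := by
    nlinarith [phi_nonneg x, phi_nonneg y, abs_nonneg (x - y)]
  nlinarith [phi_nonneg x]

lemma rhoN_le_four_mul {n : ℕ} {x y : ℝ} (hn : 0 < n) (hx : x ∈ Icc (-1 : ℝ) 1)
    (hy : y ∈ Icc (-1 : ℝ) 1) (hxy : |x - y| ≤ rhoN n x) : rhoN n x ≤ 4 * rhoN n y := by
  have hd := abs_le.mp (abs_sq_phi_sub_sq_phi_le hx hy)
  simp only [rhoN_eq] at hxy ⊢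
  have hs : 0 < (n : ℝ)⁻¹ := by positivity
  have hφ : phi x ≤ phi y + 3 * (n : ℝ)⁻¹ := by
    nlinarith [phi_nonneg x, phi_nonneg y, abs_nonneg (x - y)]
  nlinarith [phi_nonneg y]

def windowLeft (n : ℕ) (x : ℝ) : ℝ := max (-1) (x - rhoN n x)

def windowRight (n : ℕ) (x : ℝ) : ℝ := min 1 (x + rhoN n x)

section window

variable {n : ℕ} {x : ℝ}

lemma rhoN_le_windowRight_sub_windowLeft (hn : 0 < n) (hx : x ∈ Icc (-1 : ℝ) 1) :
    rhoN n x ≤ windowRight n x - windowLeft n x := by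
  simp only [windowLeft, windowRight, min_def, max_def]
  split_ifs <;> linarith [rhoN_le_two hn x, rhoN_pos hn x, hx.1, hx.2]

lemma mem_window (hn : 0 < n) (hx : x ∈ Icc (-1 : ℝ) 1) :
    x ∈ Icc (windowLeft n x) (windowRight n x) :=
  ⟨max_le hx.1 (by linarith [rhoN_pos hn x]), le_min hx.2 (by linarith [rhoN_pos hn x])⟩

lemma wAvg_eq_window {w : ℝ → ℝ} (h0 : ZeroOutside w) (hn : 0 < n)
    (hx : x ∈ Icc (-1 : ℝ) 1) :
    wAvg w n x = (rhoN n x)⁻¹ * ∫ u in (windowLeft n x)..(windowRight n x), w u := by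
  rw [wAvg, h0.intervalIntegral_eq (by linarith [rhoN_pos hn x])
    ((mem_window hn hx).1.trans (mem_window hn hx).2)]
  rfl

end window

lemma wAvg_nonneg {w : ℝ → ℝ} (hw : ∀ x, 0 ≤ w x) {n : ℕ} (hn : 0 < n) (x : ℝ) :
    0 ≤ wAvg w n x :=
  mul_nonneg (inv_nonneg.mpr (rhoN_pos hn x).le)
    (intervalIntegral.integral_nonneg (by linarith [rhoN_pos hn x]) fun u _ => hw u)

lemma continuous_rhoN (n : ℕ) : Continuous (rhoN n) := by
  unfold rhoN phi
  fun_prop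

lemma continuous_wAvg {w : ℝ → ℝ} (hw : Integrable w) {n : ℕ} (hn : 0 < n) :
    Continuous (wAvg w n) := by
  have hF : Continuous fun t => ∫ u in (0 : ℝ)..t, w u :=
    intervalIntegral.continuous_primitive (fun _ _ => hw.intervalIntegrable) 0
  have hρ := continuous_rhoN n
  have h : wAvg w n = fun x =>
      (rhoN n x)⁻¹ *
        ((∫ u in (0 : ℝ)..(x + rhoN n x), w u) - ∫ u in (0 : ℝ)..(x - rhoN n x), w u) :=
    funext fun x => by
      rw [wAvg, intervalIntegral.integral_interval_sub_left hw.intervalIntegrable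
        hw.intervalIntegrable]
  rw [h]
  exact (hρ.inv₀ fun x => (rhoN_pos hn x).ne').mul
    ((hF.comp (by fun_prop)).sub (hF.comp (by fun_prop)))

namespace AStarWith

variable {w : ℝ → ℝ} {L : ℝ} {n : ℕ}

lemma le_mul_wAvg (hw : AStarWith w L) (h0 : ZeroOutside w) (hn : 0 < n) {x : ℝ}
    (hx : x ∈ Icc (-1 : ℝ) 1) : w x ≤ L * wAvg w n x := by
  have hlen := rhoN_le_windowRight_sub_windowLeft hn hx
  have hρ := rhoN_pos hn x
  rw [wAvg_eq_window h0 hn hx]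
  calc w x ≤ L / (windowRight n x - windowLeft n x) *
        ∫ u in (windowLeft n x)..(windowRight n x), w u :=
      hw.2.2.2 (windowLeft n x) (windowRight n x) (le_max_left _ _) (by linarith)
        (min_le_left _ _) x (mem_window hn hx)
    _ ≤ L / rhoN n x * ∫ u in (windowLeft n x)..(windowRight n x), w u := by
      gcongr
      · exact hw.integral_nonneg (by linarith)
      · exact hw.1.le
    _ = L * ((rhoN n x)⁻¹ * ∫ u in (windowLeft n x)..(windowRight n x), w u) := by ring

lemma integral_le_mul_integral_wAvg (hw : AStarWith w L) (h0 : ZeroOutside w) (hn : 0 < n)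
    {a b : ℝ} (ha : -1 ≤ a) (hab : a ≤ b) (hb : b ≤ 1) :
    ∫ u in a..b, w u ≤ L * ∫ u in a..b, wAvg w n u := by
  rw [← intervalIntegral.integral_const_mul]
  exact intervalIntegral.integral_mono_on hab
    (hw.intervalIntegrable ⟨ha, hab.trans hb⟩ ⟨ha.trans hab, hb⟩)
    ((continuous_wAvg (h0.integrable hw.2.2.1) hn).intervalIntegrable _ _ |>.const_mul L)
    fun u hu => hw.le_mul_wAvg h0 hn ⟨ha.trans hu.1, hu.2.trans hb⟩

lemma wAvg_le_mul_wAvg (hw : AStarWith w L) (h0 : ZeroOutside w) (hn : 0 < n) {k : ℕ}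
    (hk : 32 ≤ (1 + (2 * L)⁻¹) ^ k) {x y : ℝ} (hx : x ∈ Icc (-1 : ℝ) 1)
    (hy : y ∈ Icc (-1 : ℝ) 1) (hxy : |x - y| ≤ rhoN n x) :
    wAvg w n x ≤ 3 * 2 ^ k * wAvg w n y := by
  have hρx := rhoN_pos hn x
  have hρy := rhoN_pos hn y
  have hρy3 := rhoN_le_three_mul hn hx hy hxy
  have hρx4 := rhoN_le_four_mul hn hx hy hxy
  have hlenx := rhoN_le_windowRight_sub_windowLeft hn hx
  have hleny := rhoN_le_windowRight_sub_windowLeft hn hy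
  have hxy' := abs_le.mp hxy
  have hLx : x - rhoN n x ≤ windowLeft n x := le_max_right _ _
  have hLy : y - rhoN n y ≤ windowLeft n y := le_max_right _ _
  have hRx : windowRight n x ≤ x + rhoN n x := min_le_right _ _
  have hRy : windowRight n y ≤ y + rhoN n y := min_le_right _ _
  set c := min (windowLeft n x) (windowLeft n y)
  set d := max (windowRight n x) (windowRight n y)
  have hc : -1 ≤ c := le_min (le_max_left _ _) (le_max_left _ _)
  have hd : d ≤ 1 := max_le (min_le_left _ _) (min_le_left _ _)
  have hcx : c ≤ x := (min_le_left _ _).trans (mem_window hn hx).1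
  have hxd : x ≤ d := (mem_window hn hx).2.trans (le_max_left _ _)
  have hsub : ∫ u in (windowLeft n x)..(windowRight n x), w u ≤ ∫ u in c..d, w u :=
    intervalIntegral.integral_mono_interval (min_le_left _ _) (by linarith) (le_max_left _ _)
      (Filter.Eventually.of_forall hw.2.1)
      (hw.intervalIntegrable ⟨hc, by linarith [hx.2]⟩ ⟨by linarith [hx.1], hd⟩)
  have hdoub :
      ∫ u in c..d, w u ≤ 2 ^ k * ∫ u in (windowLeft n y)..(windowRight n y), w u := by
    refine hw.integral_le_two_pow_mul_integral k hc (min_le_right _ _) (by linarith)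
      (le_max_right _ _) hd ?_
    have hc' : x - 4 * rhoN n x ≤ c := le_min (by linarith) (by linarith)
    have hd' : d ≤ x + 4 * rhoN n x := max_le (by linarith) (by linarith)
    nlinarith
  have hinv : (rhoN n x)⁻¹ ≤ 3 * (rhoN n y)⁻¹ := by
    rw [← div_eq_mul_inv, inv_le_iff_one_le_mul₀ hρx, div_mul_eq_mul_div, le_div_iff₀ hρy]
    linarith
  rw [wAvg_eq_window h0 hn hx, wAvg_eq_window h0 hn hy]
  calc (rhoN n x)⁻¹ * ∫ u in (windowLeft n x)..(windowRight n x), w u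
      ≤ (rhoN n x)⁻¹ * (2 ^ k * ∫ u in (windowLeft n y)..(windowRight n y), w u) := by
        gcongr
        exact hsub.trans hdoub
    _ ≤ 3 * (rhoN n y)⁻¹ * (2 ^ k * ∫ u in (windowLeft n y)..(windowRight n y), w u) := by
        gcongr
        exact mul_nonneg (by positivity) (hw.integral_nonneg (by linarith))
    _ = 3 * 2 ^ k * ((rhoN n y)⁻¹ *
        ∫ u in (windowLeft n y)..(windowRight n y), w u) := by ring

lemma wAvg_le_of_rhoN_le (hw : AStarWith w L) (h0 : ZeroOutside w) (hn : 0 < n) {k : ℕ}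
    (hk : 3 ≤ (1 + (2 * L)⁻¹) ^ k) {a b x : ℝ} (ha : -1 ≤ a) (hab : a < b) (hb : b ≤ 1)
    (hx : x ∈ Icc a b) (hρ : rhoN n x ≤ b - a) :
    wAvg w n x ≤ 2 * L * 2 ^ k / (b - a) * ∫ u in a..b, w u := by
  have hx1 : x ∈ Icc (-1 : ℝ) 1 := ⟨ha.trans hx.1, hx.2.trans hb⟩
  have hρx := rhoN_pos hn x
  have hlenx := rhoN_le_windowRight_sub_windowLeft hn hx1
  have hLx : x - rhoN n x ≤ windowLeft n x := le_max_right _ _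
  have hRx : windowRight n x ≤ x + rhoN n x := min_le_right _ _
  have hL := hw.1
  set c := min (windowLeft n x) a
  set d := max (windowRight n x) b
  have hc : -1 ≤ c := le_min (le_max_left _ _) ha
  have hd : d ≤ 1 := max_le (min_le_left _ _) hb
  have hca : c ≤ a := min_le_right _ _
  have hbd : b ≤ d := le_max_right _ _
  have hW := hw.integral_le_mul_integral hc (min_le_left _ _) (by linarith) (le_max_left _ _) hd
    (by linarith)
  have hdoub : ∫ u in c..d, w u ≤ 2 ^ k * ∫ u in a..b, w u := by
    refine hw.integral_le_two_pow_mul_integral k hc hca hab hbd hd ?_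
    have hc' : a - rhoN n x ≤ c := le_min (by linarith [hx.1]) (by linarith)
    have hd' : d ≤ b + rhoN n x := max_le (by linarith [hx.2]) (by linarith)
    nlinarith
  have hratio : (windowRight n x - windowLeft n x) / rhoN n x ≤ 2 := by
    rw [div_le_iff₀ hρx]
    linarith
  have hcoef : L / (d - c) ≤ L / (b - a) := by gcongr
  rw [wAvg_eq_window h0 hn hx1]
  calc (rhoN n x)⁻¹ * ∫ u in (windowLeft n x)..(windowRight n x), w u
      ≤ (rhoN n x)⁻¹ *
          ((windowRight n x - windowLeft n x) * (L / (d - c) * ∫ u in c..d, w u)) := by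
        gcongr
    _ = (windowRight n x - windowLeft n x) / rhoN n x * (L / (d - c)) * ∫ u in c..d, w u := by
        ring
    _ ≤ 2 * (L / (b - a)) * (2 ^ k * ∫ u in a..b, w u) := by
        have := hw.integral_nonneg (by linarith : c ≤ d)
        gcongr
        exact div_nonneg hL.le (by linarith)
    _ = 2 * L * 2 ^ k / (b - a) * ∫ u in a..b, w u := by ring

lemma wAvg_le_of_le_rhoN (hw : AStarWith w L) (h0 : ZeroOutside w) (hn : 0 < n) {k : ℕ}
    (hk : 32 ≤ (1 + (2 * L)⁻¹) ^ k) {a b x : ℝ} (ha : -1 ≤ a) (hab : a < b) (hb : b ≤ 1)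
    (hx : x ∈ Icc a b) (hρ : b - a ≤ rhoN n x) :
    wAvg w n x ≤ 3 * 2 ^ k / (b - a) * ∫ u in a..b, wAvg w n u := by
  have hmono : ∫ _ in a..b, wAvg w n x ≤ ∫ y in a..b, 3 * 2 ^ k * wAvg w n y :=
    intervalIntegral.integral_mono_on hab.le intervalIntegrable_const
      ((continuous_wAvg (h0.integrable hw.2.2.1) hn).intervalIntegrable a b |>.const_mul _)
      fun y hy => hw.wAvg_le_mul_wAvg h0 hn hk ⟨ha.trans hx.1, hx.2.trans hb⟩
        ⟨ha.trans hy.1, hy.2.trans hb⟩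
        (abs_le.mpr ⟨by linarith [hx.1, hy.2], by linarith [hx.2, hy.1]⟩)
  rw [intervalIntegral.integral_const, smul_eq_mul, intervalIntegral.integral_const_mul] at hmono
  rw [div_mul_eq_mul_div, le_div_iff₀ (sub_pos.mpr hab)]
  linarith

end AStarWith

lemma aStarWith_wAvg {w : ℝ → ℝ} {L : ℝ} {n : ℕ} (hw : AStarWith w L) (h0 : ZeroOutside w)
    (hn : 0 < n) {k : ℕ} (hk : 32 ≤ (1 + (2 * L)⁻¹) ^ k) :
    AStarWith (wAvg w n) (2 ^ k * (3 + 2 * L ^ 2)) := by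
  have hL := hw.1
  refine ⟨by positivity, wAvg_nonneg hw.2.1 hn,
    (continuous_wAvg (h0.integrable hw.2.2.1) hn).integrableOn_Icc, fun a b ha hab hb x hx => ?_⟩
  have hI : 0 ≤ ∫ u in a..b, wAvg w n u :=
    intervalIntegral.integral_nonneg hab.le fun u _ => wAvg_nonneg hw.2.1 hn u
  have hba : 0 < b - a := sub_pos.mpr hab
  rcases le_total (b - a) (rhoN n x) with hsmall | hlarge
  · calc wAvg w n x ≤ 3 * 2 ^ k / (b - a) * ∫ u in a..b, wAvg w n u :=
          hw.wAvg_le_of_le_rhoN h0 hn hk ha hab hb hx hsmall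
      _ ≤ 2 ^ k * (3 + 2 * L ^ 2) / (b - a) * ∫ u in a..b, wAvg w n u := by
          gcongr ?_ / _ * _
          nlinarith [pow_pos (two_pos : (0 : ℝ) < 2) k]
  · calc wAvg w n x ≤ 2 * L * 2 ^ k / (b - a) * ∫ u in a..b, w u :=
          hw.wAvg_le_of_rhoN_le h0 hn (by linarith) ha hab hb hx hlarge
      _ ≤ 2 * L * 2 ^ k / (b - a) * (L * ∫ u in a..b, wAvg w n u) := by
          gcongr
          exact hw.integral_le_mul_integral_wAvg h0 hn ha hab.le hb
      _ = 2 * L ^ 2 * 2 ^ k / (b - a) * ∫ u in a..b, wAvg w n u := by ring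
      _ ≤ 2 ^ k * (3 + 2 * L ^ 2) / (b - a) * ∫ u in a..b, wAvg w n u := by
          gcongr ?_ / _ * _
          nlinarith [pow_pos (two_pos : (0 : ℝ) < 2) k]

/-- the averaged weight `w_n` is an A* weight,
with A* constant depending only on `L*`. -/
theorem stmt_2 (Lstar : ℝ) (hLstar : 0 < Lstar) :
    ∃ L : ℝ, 0 < L ∧ ∀ (w : ℝ → ℝ) (n : ℕ), 1 ≤ n →
      AStarWith w Lstar → ZeroOutside w → AStarWith (wAvg w n) L := by
  obtain ⟨k, hk⟩ := pow_unbounded_of_one_lt (32 : ℝ)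
    (lt_add_of_pos_right 1 (by positivity : 0 < (2 * Lstar)⁻¹))
  exact ⟨2 ^ k * (3 + 2 * Lstar ^ 2), by positivity,
    fun w n hn hw h0 => aStarWith_wAvg hw h0 hn hk.le⟩
end
end
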